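/- arXiv:1702.08316 — 5 statements merged into one kernel-verified Lean document; each statement's English description precedes it below -/
import Mathlib

section
/- For all real p, q ≥ 0, the supremum over α, γ ∈ ℝ of √(p·|cos α · cos γ|) + √(q·|sin α · sin γ|) equals √(p + q), and it is attained. -/
/-! By Cauchy–Schwarz, `√(p a) + √(q b) ≤ √((p + q) (a + b))`, and
`|cos α cos γ| + |sin α sin γ| ≤ 1` by AM–GM, which gives the bound `√(p + q)`.
Equality holds for `α = γ` with `cos² α = p / (p + q)`. -/

open Real

lemma sqrt_mul_add_sqrt_mul_le {p q a b : ℝ} (hp : 0 ≤ p) (hq : 0 ≤ q) (ha : 0 ≤ a)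
    (hb : 0 ≤ b) : √(p * a) + √(q * b) ≤ √((p + q) * (a + b)) := by
  rw [sqrt_mul hp, sqrt_mul hq]
  apply le_sqrt_of_sq_le
  nlinarith [sq_sqrt hp, sq_sqrt hq, sq_sqrt ha, sq_sqrt hb,
    sq_nonneg (√p * √b - √q * √a)]

lemma sqrt_mul_div_add_sqrt_mul_div {p q : ℝ} (hp : 0 ≤ p) (hq : 0 ≤ q) :
    √(p * (p / (p + q))) + √(q * (q / (p + q))) = √(p + q) := by
  rw [mul_div_assoc', mul_div_assoc', sqrt_div (mul_self_nonneg p),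
    sqrt_div (mul_self_nonneg q), sqrt_mul_self hp, sqrt_mul_self hq, ← add_div, div_sqrt]

lemma abs_cos_mul_cos_add_abs_sin_mul_sin_le_one (α γ : ℝ) :
    |cos α * cos γ| + |sin α * sin γ| ≤ 1 := by
  have hc := two_mul_le_add_sq |cos α| |cos γ|
  have hs := two_mul_le_add_sq |sin α| |sin γ|
  simp only [sq_abs] at hc hs
  rw [abs_mul, abs_mul]
  linarith [sin_sq_add_cos_sq α, sin_sq_add_cos_sq γ]

lemma exists_cos_sq_eq_sin_sq_eq {a b : ℝ} (ha : 0 ≤ a) (hb : 0 ≤ b)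
    (hab : a + b = 1) :
    ∃ α : ℝ, cos α ^ 2 = a ∧ sin α ^ 2 = b := by
  have ha1 : √a ≤ 1 := sqrt_le_one.mpr (by linarith)
  have hcos : cos (arccos √a) = √a := cos_arccos (by linarith [sqrt_nonneg a]) ha1
  refine ⟨arccos √a, ?_, ?_⟩
  · rw [hcos, sq_sqrt ha]
  · rw [sin_sq, hcos, sq_sqrt ha]
    linarith

/-- For p, q ≥ 0, the supremum over α, γ ∈ ℝ of
    √(p·|cos α · cos γ|) + √(q·|sin α · sin γ|) equals √(p + q), attained. -/
theorem sup_sqrt_cos_sin_combination (p q : ℝ) (hp : 0 ≤ p) (hq : 0 ≤ q) :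
    IsGreatest
      { x : ℝ | ∃ α γ : ℝ,
          x = Real.sqrt (p * |Real.cos α * Real.cos γ|)
            + Real.sqrt (q * |Real.sin α * Real.sin γ|) }
      (Real.sqrt (p + q)) := by
  constructor
  · rcases (add_nonneg hp hq).eq_or_lt with hpq | hpq
    · have hp0 : p = 0 := by linarith
      have hq0 : q = 0 := by linarith
      exact ⟨0, 0, by simp [hp0, hq0]⟩
    · obtain ⟨α, hcos, hsin⟩ := exists_cos_sq_eq_sin_sq_eq (a := p / (p + q)) (b := q / (p + q))
        (by positivity) (by positivity) (by field_simp)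
      refine ⟨α, α, ?_⟩
      rw [← sq, ← sq, abs_sq, abs_sq, hcos, hsin, sqrt_mul_div_add_sqrt_mul_div hp hq]
  · rintro _ ⟨α, γ, rfl⟩
    calc _ ≤ √((p + q) * (|cos α * cos γ| + |sin α * sin γ|)) :=
          sqrt_mul_add_sqrt_mul_le hp hq (abs_nonneg _) (abs_nonneg _)
      _ ≤ √((p + q) * 1) := by
          gcongr
          exact abs_cos_mul_cos_add_abs_sin_mul_sin_le_one α γ
      _ = √(p + q) := by rw [mul_one]
end

section
/- For all real λ₁, λ₂ ≥ 0 and every natural number n ≥ 1, the supremum over (α₁, …, α_n) ∈ ℝⁿ of |λ₁·∏_{i=1}^n cos α_i|^(1/n) + |λ₂·∏_{i=1}^n sin α_i|^(1/n) equals √(λ₁^(2/n) + λ₂^(2/n)), and it is attained. -/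
set_option maxHeartbeats 1600000


open Finset

lemma aux_upper_bound (n : ℕ) (hn : 1 ≤ n) (a b : ℝ) (ha : 0 ≤ a) (hb : 0 ≤ b)
    (c s : Fin n → ℝ) (hc : ∀ i, 0 ≤ c i) (hs : ∀ i, 0 ≤ s i)
    (hcs : ∀ i, c i ^ 2 + s i ^ 2 = 1) :
    a * ∏ i, c i ^ ((1:ℝ)/n) + b * ∏ i, s i ^ ((1:ℝ)/n)
      ≤ Real.sqrt (a ^ 2 + b ^ 2) := by
  have hn0 : (0:ℝ) < n := by exact_mod_cast Nat.lt_of_lt_of_le Nat.zero_lt_one hn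
  have hinv : (0:ℝ) < 1 / n := by positivity
  have hwsum : ∑ _i : Fin n, (1:ℝ)/n = 1 := by
    rw [Finset.sum_const, Finset.card_univ, Fintype.card_fin, nsmul_eq_mul]
    field_simp
  have sq_prod : ∀ (f : Fin n → ℝ), (∀ i, 0 ≤ f i) →
      (∏ i, f i ^ ((1:ℝ)/n)) ^ 2 = ∏ i, (f i ^ 2) ^ ((1:ℝ)/n) := by
    intro f hf
    rw [← Finset.prod_pow]
    refine Finset.prod_congr rfl fun i _ => ?_
    rw [← Real.rpow_natCast (f i ^ ((1:ℝ)/n)) 2, ← Real.rpow_mul (hf i),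
      ← Real.rpow_natCast (f i) 2, ← Real.rpow_mul (hf i)]
    norm_num; ring_nf
  have amgm : ∀ (f : Fin n → ℝ), (∀ i, 0 ≤ f i) →
      ∏ i, (f i ^ 2) ^ ((1:ℝ)/n) ≤ ∑ i, (1/(n:ℝ)) * (f i ^ 2) :=
    fun f hf => Real.geom_mean_le_arith_mean_weighted _ _ _
      (fun i _ => le_of_lt hinv) hwsum (fun i _ => sq_nonneg _)
  set u := ∏ i, c i ^ ((1:ℝ)/n) with hu_def
  set v := ∏ i, s i ^ ((1:ℝ)/n) with hv_def
  have hu : 0 ≤ u := Finset.prod_nonneg fun i _ => Real.rpow_nonneg (hc i) _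
  have hv : 0 ≤ v := Finset.prod_nonneg fun i _ => Real.rpow_nonneg (hs i) _
  have huv : u ^ 2 + v ^ 2 ≤ 1 := by
    have h1 := amgm c hc
    have h2 := amgm s hs
    have hsum : (∑ i, (1/(n:ℝ)) * (c i ^ 2)) + (∑ i, (1/(n:ℝ)) * (s i ^ 2)) = 1 := by
      rw [← Finset.sum_add_distrib]
      calc (∑ i, ((1/(n:ℝ)) * c i ^ 2 + (1/(n:ℝ)) * s i ^ 2))
          = ∑ _i : Fin n, (1:ℝ)/n :=
            Finset.sum_congr rfl fun i _ => by rw [← mul_add, hcs i, mul_one]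
        _ = 1 := hwsum
    rw [sq_prod c hc, sq_prod s hs]
    linarith
  have hx0 : 0 ≤ a * u + b * v := by positivity
  have hkey : (a * u + b * v) ^ 2 ≤ a ^ 2 + b ^ 2 := by
    nlinarith [sq_nonneg (a * v - b * u), huv, mul_nonneg ha hu, mul_nonneg hb hv,
      sq_nonneg a, sq_nonneg b]
  calc a * u + b * v = Real.sqrt ((a * u + b * v) ^ 2) := (Real.sqrt_sq hx0).symm
    _ ≤ Real.sqrt (a ^ 2 + b ^ 2) := Real.sqrt_le_sqrt hkey

/-- For λ₁, λ₂ ≥ 0 and n ≥ 1, the supremum over (α₁, …, α_n) ∈ ℝⁿ of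
    |λ₁·∏ cos αᵢ|^(1/n) + |λ₂·∏ sin αᵢ|^(1/n) equals √(λ₁^(2/n) + λ₂^(2/n)),
    and it is attained. -/
theorem sup_nthroot_products_cos_sin (lam₁ lam₂ : ℝ) (h₁ : 0 ≤ lam₁) (h₂ : 0 ≤ lam₂)
    (n : ℕ) (hn : 1 ≤ n) :
    IsGreatest
      { x : ℝ | ∃ α : Fin n → ℝ,
          x = |lam₁ * ∏ i, Real.cos (α i)| ^ ((1 : ℝ) / n)
            + |lam₂ * ∏ i, Real.sin (α i)| ^ ((1 : ℝ) / n) }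
      (Real.sqrt (lam₁ ^ ((2 : ℝ) / n) + lam₂ ^ ((2 : ℝ) / n))) := by
  have hn0 : (0:ℝ) < n := by exact_mod_cast Nat.lt_of_lt_of_le Nat.zero_lt_one hn
  have hinv : (0:ℝ) < 1 / n := by positivity
  set a := lam₁ ^ ((1:ℝ)/n) with ha_def
  set b := lam₂ ^ ((1:ℝ)/n) with hb_def
  have ha : 0 ≤ a := Real.rpow_nonneg h₁ _
  have hb : 0 ≤ b := Real.rpow_nonneg h₂ _
  have haa : lam₁ ^ ((2:ℝ)/n) = a ^ 2 := by
    rw [ha_def, ← Real.rpow_natCast (lam₁ ^ ((1:ℝ)/n)) 2, ← Real.rpow_mul h₁]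
    norm_num; ring_nf
  have hbb : lam₂ ^ ((2:ℝ)/n) = b ^ 2 := by
    rw [hb_def, ← Real.rpow_natCast (lam₂ ^ ((1:ℝ)/n)) 2, ← Real.rpow_mul h₂]
    norm_num; ring_nf
  rw [haa, hbb]
  set S := Real.sqrt (a ^ 2 + b ^ 2) with hS_def
  have hS0 : 0 ≤ S := Real.sqrt_nonneg _
  have hS2 : S ^ 2 = a ^ 2 + b ^ 2 := Real.sq_sqrt (by positivity)
  clear_value a b S
  constructor
  · -- membership: the supremum is attained
    rcases eq_or_lt_of_le hS0 with hS | hS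
    · -- S = 0, hence lam₁ = lam₂ = 0
      have hab : a = 0 ∧ b = 0 := by
        constructor <;> nlinarith [hS2, sq_nonneg a, sq_nonneg b]
      have hl1 : lam₁ = 0 := by
        have := hab.1
        rwa [ha_def, Real.rpow_eq_zero h₁ (ne_of_gt hinv)] at this
      have hl2 : lam₂ = 0 := by
        have := hab.2
        rwa [hb_def, Real.rpow_eq_zero h₂ (ne_of_gt hinv)] at this
      refine ⟨fun _ => 0, ?_⟩
      rw [hl1, hl2, ← hS]
      simp only [zero_mul, abs_zero, Real.zero_rpow (ne_of_gt hinv), add_zero]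
    · -- S > 0
      have haS : a / S ≤ 1 := by
        rw [div_le_one hS]
        nlinarith [hS2, sq_nonneg b, ha, hS0]
      have haS0 : 0 ≤ a / S := by positivity
      set θ := Real.arccos (a / S) with hθ_def
      have hcos : Real.cos θ = a / S := Real.cos_arccos (by linarith) haS
      have hsin : Real.sin θ = b / S := by
        rw [hθ_def, Real.sin_arccos]
        have h : 1 - (a / S) ^ 2 = (b / S) ^ 2 := by
          field_simp
          nlinarith [hS2]
        rw [h, Real.sqrt_sq (by positivity)]
      refine ⟨fun _ => θ, ?_⟩
      simp only [hcos, hsin, Finset.prod_const, Finset.card_univ, Fintype.card_fin]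
      have key : ∀ (lam c : ℝ), 0 ≤ lam → 0 ≤ c →
          |lam * c ^ n| ^ ((1:ℝ)/n) = lam ^ ((1:ℝ)/n) * c := by
        intro lam c hlam hc
        rw [abs_of_nonneg (by positivity), Real.mul_rpow hlam (by positivity),
          ← Real.rpow_natCast c n, ← Real.rpow_mul hc]
        rw [mul_one_div, div_self (ne_of_gt hn0), Real.rpow_one]
      rw [key lam₁ (a/S) h₁ haS0, key lam₂ (b/S) h₂ (by positivity),
        ← ha_def, ← hb_def]
      have hSne : S ≠ 0 := ne_of_gt hS
      have hfin : a * (a / S) + b * (b / S) = S := by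
        field_simp
        nlinarith [hS2]
      exact hfin.symm
  · -- upper bound
    rintro x ⟨α, rfl⟩
    have e1 : |lam₁ * ∏ i, Real.cos (α i)| ^ ((1:ℝ)/n)
        = a * ∏ i, |Real.cos (α i)| ^ ((1:ℝ)/n) := by
      rw [abs_mul, abs_of_nonneg h₁, Finset.abs_prod,
        Real.mul_rpow h₁ (Finset.prod_nonneg fun i _ => abs_nonneg _),
        Real.finset_prod_rpow _ _ (fun i _ => abs_nonneg _), ha_def]
    have e2 : |lam₂ * ∏ i, Real.sin (α i)| ^ ((1:ℝ)/n)
        = b * ∏ i, |Real.sin (α i)| ^ ((1:ℝ)/n) := by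
      rw [abs_mul, abs_of_nonneg h₂, Finset.abs_prod,
        Real.mul_rpow h₂ (Finset.prod_nonneg fun i _ => abs_nonneg _),
        Real.finset_prod_rpow _ _ (fun i _ => abs_nonneg _), hb_def]
    rw [e1, e2, hS_def]
    exact aux_upper_bound n hn a b ha hb _ _ (fun i => abs_nonneg _) (fun i => abs_nonneg _)
      (fun i => by simp only [sq_abs]; exact Real.cos_sq_add_sin_sq (α i))
end

section
/- Let ρ_AB and ρ_BC be two-qubit states with correlation matrices T_{ρ_AB} and T_{ρ_BC}. Let t^A₁ ≥ t^A₂ be the two largest eigenvalues of T_{ρ_AB}ᵀ T_{ρ_AB} and t^C₁ ≥ t^C₂ the two largest eigenvalues of T_{ρ_BC}ᵀ T_{ρ_BC}, and define S_AB = √(t^A₁ + t^A₂), S_BC = √(t^C₁ + t^C₂) and B_max = √(√(t^A₁ t^C₁) + √(t^A₂ t^C₂)). If S_AB ≤ 1 and S_BC ≤ 1, then B_max ≤ 1. -/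
open Matrix Kronecker Complex ComplexOrder

/-- The Pauli matrices σ₁ = σ_x, σ₂ = σ_y, σ₃ = σ_z. -/
noncomputable def pauli : Fin 3 → Matrix (Fin 2) (Fin 2) ℂ :=
  ![!![0, 1; 1, 0], !![0, -Complex.I; Complex.I, 0], !![1, 0; 0, -1]]

/-- For v ∈ ℝ³, the matrix v·σ = v₁σ_x + v₂σ_y + v₃σ_z. -/
noncomputable def pauliVec (v : Fin 3 → ℝ) : Matrix (Fin 2) (Fin 2) ℂ :=
  (v 0 : ℂ) • pauli 0 + (v 1 : ℂ) • pauli 1 + (v 2 : ℂ) • pauli 2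

/-- A two-qubit state: a 4×4 complex positive semidefinite matrix of trace 1. -/
def TwoQubitState (ρ : Matrix (Fin 2 × Fin 2) (Fin 2 × Fin 2) ℂ) : Prop :=
  ρ.PosSemidef ∧ ρ.trace = 1

/-- The correlation matrix of a two-qubit state: (T_ρ)_{nm} = Tr[(σ_n ⊗ σ_m) ρ]. -/
noncomputable def corr (ρ : Matrix (Fin 2 × Fin 2) (Fin 2 × Fin 2) ℂ) :
    Matrix (Fin 3) (Fin 3) ℝ :=
  Matrix.of fun n m => ((pauli n ⊗ₖ pauli m) * ρ).trace.re

/-- The two largest eigenvalues (with multiplicity, in decreasing order) of a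
    symmetric real 3×3 matrix, as the pair (largest, second largest). -/
noncomputable def topEigs (M : Matrix (Fin 3) (Fin 3) ℝ) : ℝ × ℝ :=
  if h : M.IsHermitian then
    ((h.eigenvalues ∘ Tuple.sort h.eigenvalues) 2,
     (h.eigenvalues ∘ Tuple.sort h.eigenvalues) 1)
  else 0

/-- If neither source can violate the CHSH inequality (S_AB ≤ 1 and S_BC ≤ 1),
    then the bilocality inequality cannot be violated either (B_max ≤ 1). -/
theorem chsh_local_sources_imply_bilocal
    (ρAB ρBC : Matrix (Fin 2 × Fin 2) (Fin 2 × Fin 2) ℂ)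
    (hAB : TwoQubitState ρAB) (hBC : TwoQubitState ρBC)
    (tA1 tA2 tC1 tC2 : ℝ)
    (htA : topEigs ((corr ρAB)ᵀ * corr ρAB) = (tA1, tA2))
    (htC : topEigs ((corr ρBC)ᵀ * corr ρBC) = (tC1, tC2))
    (hSAB : Real.sqrt (tA1 + tA2) ≤ 1) (hSBC : Real.sqrt (tC1 + tC2) ≤ 1) :
    Real.sqrt (Real.sqrt (tA1 * tC1) + Real.sqrt (tA2 * tC2)) ≤ 1 := by
  have key : ∀ (T : Matrix (Fin 3) (Fin 3) ℝ) (a b : ℝ),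
      topEigs (Tᵀ * T) = (a, b) → 0 ≤ a ∧ 0 ≤ b := by
    intro T a b h
    have hpsd : (Tᵀ * T).PosSemidef := by
      simpa using Matrix.posSemidef_conjTranspose_mul_self T
    have hherm := hpsd.isHermitian
    rw [topEigs, dif_pos hherm] at h
    obtain ⟨h1, h2⟩ := Prod.mk.inj h
    exact ⟨h1 ▸ hpsd.eigenvalues_nonneg _, h2 ▸ hpsd.eigenvalues_nonneg _⟩
  obtain ⟨hA1, hA2⟩ := key _ _ _ htA
  obtain ⟨hC1, hC2⟩ := key _ _ _ htC
  have hA : tA1 + tA2 ≤ 1 := by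
    nlinarith [Real.sq_sqrt (show (0:ℝ) ≤ tA1 + tA2 by linarith),
      Real.sqrt_nonneg (tA1 + tA2)]
  have hC : tC1 + tC2 ≤ 1 := by
    nlinarith [Real.sq_sqrt (show (0:ℝ) ≤ tC1 + tC2 by linarith),
      Real.sqrt_nonneg (tC1 + tC2)]
  have amgm : ∀ x y : ℝ, 0 ≤ x → 0 ≤ y → Real.sqrt (x * y) ≤ (x + y) / 2 := by
    intro x y hx hy
    have h1 : x * y ≤ ((x + y) / 2) ^ 2 := by nlinarith [sq_nonneg (x - y)]
    calc Real.sqrt (x * y) ≤ Real.sqrt (((x + y) / 2) ^ 2) := Real.sqrt_le_sqrt h1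
      _ = (x + y) / 2 := Real.sqrt_sq (by linarith)
  have h1 := amgm tA1 tC1 hA1 hC1
  have h2 := amgm tA2 tC2 hA2 hC2
  exact Real.sqrt_le_one.mpr (by linarith)
end

section
/- There exist two-qubit states ρ_AB and ρ_BC such that, denoting by t^A₁ ≥ t^A₂ the two largest eigenvalues of T_{ρ_AB}ᵀ T_{ρ_AB} and by t^C₁ ≥ t^C₂ the two largest eigenvalues of T_{ρ_BC}ᵀ T_{ρ_BC}, one has √(t^A₁ + t^A₂) > 1 and √(t^C₁ + t^C₂) > 1 but √(√(t^A₁ t^C₁) + √(t^A₂ t^C₂)) ≤ 1. In particular this holds for ρ_AB = (3/5)|ψ⁺⟩⟨ψ⁺| + (2/5)|φ⁺⟩⟨φ⁺| and ρ_BC = (7/10)|ψ⁻⟩⟨ψ⁻| + (3/10)·[(1/3)·(|ψ⁻⟩⟨ψ⁻| + |ψ⁺⟩⟨ψ⁺|)/2 + (2/3)·I/4], for which t^A₁ = 1, t^A₂ = 1/25, t^C₁ = 16/25 and t^C₂ = 49/100. -/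
open Matrix Kronecker Complex ComplexOrder

/-- Computational basis vectors of ℂ² ⊗ ℂ² ≅ ℂ⁴. -/
def ket (i j : Fin 2) : (Fin 2 × Fin 2) → ℂ := fun p => if p = (i, j) then 1 else 0

/-- Bell states. -/
noncomputable def phiPlus : (Fin 2 × Fin 2) → ℂ := ((Real.sqrt 2 : ℂ))⁻¹ • (ket 0 0 + ket 1 1)
noncomputable def psiPlus : (Fin 2 × Fin 2) → ℂ := ((Real.sqrt 2 : ℂ))⁻¹ • (ket 0 1 + ket 1 0)
noncomputable def psiMinus : (Fin 2 × Fin 2) → ℂ := ((Real.sqrt 2 : ℂ))⁻¹ • (ket 0 1 - ket 1 0)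

/-- The rank-one projection |v⟩⟨v|. -/
noncomputable def proj (v : (Fin 2 × Fin 2) → ℂ) :
    Matrix (Fin 2 × Fin 2) (Fin 2 × Fin 2) ℂ :=
  Matrix.vecMulVec v (star v)

/-- The specific state ρ_AB = (3/5)|ψ⁺⟩⟨ψ⁺| + (2/5)|φ⁺⟩⟨φ⁺|. -/
noncomputable def ρABex : Matrix (Fin 2 × Fin 2) (Fin 2 × Fin 2) ℂ :=
  (3/5 : ℂ) • proj psiPlus + (2/5 : ℂ) • proj phiPlus

/-- The specific state
    ρ_BC = (7/10)|ψ⁻⟩⟨ψ⁻| + (3/10)·[(1/3)·(|ψ⁻⟩⟨ψ⁻| + |ψ⁺⟩⟨ψ⁺|)/2 + (2/3)·I/4]. -/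
noncomputable def ρBCex : Matrix (Fin 2 × Fin 2) (Fin 2 × Fin 2) ℂ :=
  (7/10 : ℂ) • proj psiMinus +
    (3/10 : ℂ) • ((1/3 : ℂ) • ((1/2 : ℂ) • (proj psiMinus + proj psiPlus))
      + (2/3 : ℂ) • ((1/4 : ℂ) • (1 : Matrix (Fin 2 × Fin 2) (Fin 2 × Fin 2) ℂ)))

/-!
Both states are Bell-diagonal. The correlation matrix is real-linear in the state, vanishes on
the identity, and equals `diag(1,-1,1)`, `diag(1,1,-1)`, `diag(-1,-1,-1)` on the projections onto
`φ⁺`, `ψ⁺`, `ψ⁻`. Hence `T_AB = diag(1, 1/5, -1/5)` and `T_BC = diag(-7/10, -7/10, -4/5)`, so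
`TᵀT` is diagonal with the squares on the diagonal and its two largest eigenvalues are read off
after sorting. What remains is arithmetic: `26/25 > 1`, `113/100 > 1`, `4/5 + 7/50 ≤ 1`.
-/

theorem Tuple.comp_sort_eq_comp_sort_of_map_eq {α : Type*} [LinearOrder α] {n : ℕ}
    {f g : Fin n → α} (h : Finset.univ.val.map f = Finset.univ.val.map g) :
    f ∘ Tuple.sort f = g ∘ Tuple.sort g := by
  refine List.ofFn_injective <| List.Perm.eq_of_sortedLE (Tuple.monotone_sort f).sortedLE_ofFn
    (Tuple.monotone_sort g).sortedLE_ofFn ?_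
  rw [Fin.univ_val_map, Fin.univ_val_map, Multiset.coe_eq_coe] at h
  exact ((Tuple.sort f).ofFn_comp_perm f).trans (h.trans ((Tuple.sort g).ofFn_comp_perm g).symm)

theorem Matrix.map_univ_eigenvalues_diagonal {n : Type*} [Fintype n] [DecidableEq n]
    (d : n → ℝ) :
    Finset.univ.val.map (isHermitian_diagonal d).eigenvalues = Finset.univ.val.map d := by
  have h := (isHermitian_diagonal d).roots_charpoly_eq_eigenvalues
  have hd := Polynomial.roots_multiset_prod_X_sub_C (Finset.univ.val.map d)
  rw [Multiset.map_map, ← Finset.prod_eq_multiset_prod] at hd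
  rw [charpoly_diagonal] at h
  simpa [h] using hd

theorem topEigs_diagonal (d : Fin 3 → ℝ) (σ : Equiv.Perm (Fin 3)) (hσ : Monotone (d ∘ σ)) :
    topEigs (diagonal d) = (d (σ 2), d (σ 1)) := by
  rw [topEigs, dif_pos (isHermitian_diagonal d),
    Tuple.comp_sort_eq_comp_sort_of_map_eq (map_univ_eigenvalues_diagonal d),
    ← Tuple.comp_sort_eq_comp_iff_monotone.2 hσ]
  rfl

theorem posSemidef_proj (v : Fin 2 × Fin 2 → ℂ) : (proj v).PosSemidef :=
  posSemidef_vecMulVec_self_star v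

theorem proj_smul (c : ℂ) (v : Fin 2 × Fin 2 → ℂ) : proj (c • v) = (c * star c) • proj v := by
  ext i j
  simp only [proj, vecMulVec_apply, star_smul, Pi.smul_apply, smul_eq_mul, Pi.star_apply,
    Matrix.smul_apply]
  ring

theorem proj_inv_sqrt_two_smul (v : Fin 2 × Fin 2 → ℂ) :
    proj ((Real.sqrt 2 : ℂ)⁻¹ • v) = (1/2 : ℂ) • proj v := by
  rw [proj_smul, star_inv₀, Complex.star_def, Complex.conj_ofReal, ← mul_inv,
    ← Complex.ofReal_mul, Real.mul_self_sqrt zero_le_two]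
  norm_num

theorem trace_proj_phiPlus : (proj phiPlus).trace = 1 := by
  rw [phiPlus, proj_inv_sqrt_two_smul]
  norm_num [proj, trace_vecMulVec, ket, dotProduct, Fintype.sum_prod_type]

theorem trace_proj_psiPlus : (proj psiPlus).trace = 1 := by
  rw [psiPlus, proj_inv_sqrt_two_smul]
  norm_num [proj, trace_vecMulVec, ket, dotProduct, Fintype.sum_prod_type]

theorem trace_proj_psiMinus : (proj psiMinus).trace = 1 := by
  rw [psiMinus, proj_inv_sqrt_two_smul]
  norm_num [proj, trace_vecMulVec, ket, dotProduct, Fintype.sum_prod_type]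

theorem trace_pauli (n : Fin 3) : (pauli n).trace = 0 := by
  fin_cases n <;> simp [pauli, trace_fin_two]

theorem corr_add (ρ ρ' : Matrix (Fin 2 × Fin 2) (Fin 2 × Fin 2) ℂ) :
    corr (ρ + ρ') = corr ρ + corr ρ' := by
  ext n m
  simp [corr, Matrix.mul_add, trace_add]

theorem corr_smul {c : ℂ} (hc : c.im = 0) (ρ : Matrix (Fin 2 × Fin 2) (Fin 2 × Fin 2) ℂ) :
    corr (c • ρ) = c.re • corr ρ := by
  ext n m
  simp [corr, trace_smul, hc]

theorem corr_one : corr 1 = 0 := by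
  ext n m
  simp [corr, trace_kronecker, trace_pauli]

theorem corr_proj_phiPlus : corr (proj phiPlus) = diagonal ![1, -1, 1] := by
  rw [phiPlus, proj_inv_sqrt_two_smul, corr_smul (by norm_num)]
  ext n m
  fin_cases n <;> fin_cases m <;>
    norm_num [corr, proj, ket, pauli, trace, mul_apply, vecMulVec_apply, Fintype.sum_prod_type]

theorem corr_proj_psiPlus : corr (proj psiPlus) = diagonal ![1, 1, -1] := by
  rw [psiPlus, proj_inv_sqrt_two_smul, corr_smul (by norm_num)]
  ext n m
  fin_cases n <;> fin_cases m <;>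
    norm_num [corr, proj, ket, pauli, trace, mul_apply, vecMulVec_apply, Fintype.sum_prod_type]

theorem corr_proj_psiMinus : corr (proj psiMinus) = diagonal ![-1, -1, -1] := by
  rw [psiMinus, proj_inv_sqrt_two_smul, corr_smul (by norm_num)]
  ext n m
  fin_cases n <;> fin_cases m <;>
    norm_num [corr, proj, ket, pauli, trace, mul_apply, vecMulVec_apply, Fintype.sum_prod_type]

theorem twoQubitState_ρABex : TwoQubitState ρABex := by
  refine ⟨.add (.smul (posSemidef_proj _) (by positivity))
    (.smul (posSemidef_proj _) (by positivity)), ?_⟩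
  norm_num [ρABex, trace_add, trace_smul, trace_proj_psiPlus, trace_proj_phiPlus]

theorem twoQubitState_ρBCex : TwoQubitState ρBCex := by
  have hmix : ((1/2 : ℂ) • (proj psiMinus + proj psiPlus)).PosSemidef :=
    .smul (.add (posSemidef_proj _) (posSemidef_proj _)) (by positivity)
  have hnoise : ((1/4 : ℂ) • (1 : Matrix (Fin 2 × Fin 2) (Fin 2 × Fin 2) ℂ)).PosSemidef :=
    .smul .one (by positivity)
  refine ⟨.add (.smul (posSemidef_proj _) (by positivity))
    (.smul (.add (.smul hmix (by positivity)) (.smul hnoise (by positivity))) (by positivity)), ?_⟩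
  norm_num [ρBCex, trace_add, trace_smul, trace_proj_psiPlus, trace_proj_psiMinus]

theorem corr_ρABex : corr ρABex = diagonal ![1, 1/5, -1/5] := by
  ext i j
  fin_cases i <;> fin_cases j <;>
    norm_num [ρABex, corr_add, corr_smul, corr_proj_psiPlus, corr_proj_phiPlus]

theorem corr_ρBCex : corr ρBCex = diagonal ![-7/10, -7/10, -4/5] := by
  ext i j
  fin_cases i <;> fin_cases j <;>
    norm_num [ρBCex, corr_add, corr_smul, corr_proj_psiPlus, corr_proj_psiMinus, corr_one]

theorem topEigs_ρABex : topEigs ((corr ρABex)ᵀ * corr ρABex) = (1, 1/25) := by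
  rw [corr_ρABex, diagonal_transpose, diagonal_mul_diagonal,
    topEigs_diagonal _ (Equiv.swap 0 2) (Fin.monotone_iff_le_succ.2 ?_)]
  · simp only [Equiv.swap_apply_right, Equiv.swap_apply_of_ne_of_ne, ne_eq, Fin.reduceEq,
      not_false_eq_true, cons_val_zero, cons_val_one, Prod.mk.injEq]
    norm_num
  · simp only [Fin.forall_fin_two, Function.comp_apply, Fin.castSucc_zero, Fin.succ_zero_eq_one,
      Fin.castSucc_one, Fin.succ_one_eq_two, Equiv.swap_apply_left, Equiv.swap_apply_right,
      Equiv.swap_apply_of_ne_of_ne, ne_eq, Fin.reduceEq, not_false_eq_true, cons_val]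
    norm_num

theorem topEigs_ρBCex : topEigs ((corr ρBCex)ᵀ * corr ρBCex) = (16/25, 49/100) := by
  rw [corr_ρBCex, diagonal_transpose, diagonal_mul_diagonal,
    topEigs_diagonal _ 1 (Fin.monotone_iff_le_succ.2 ?_)]
  · simp only [Equiv.Perm.coe_one, id_eq, cons_val, Prod.mk.injEq]
    norm_num
  · simp only [Fin.forall_fin_two, Equiv.Perm.coe_one, Function.comp_apply, id_eq,
      Fin.castSucc_zero, Fin.succ_zero_eq_one, Fin.castSucc_one, Fin.succ_one_eq_two, cons_val]
    norm_num

/-- There exist two-qubit states which are both CHSH non-local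
    (S_AB > 1 and S_BC > 1) yet cannot violate the bilocality inequality
    (B_max ≤ 1); in particular this holds for the states ρABex and ρBCex,
    for which t^A₁ = 1, t^A₂ = 1/25, t^C₁ = 16/25 and t^C₂ = 49/100. -/
theorem exists_chsh_nonlocal_states_with_bilocal_bound :
    (∃ ρAB ρBC : Matrix (Fin 2 × Fin 2) (Fin 2 × Fin 2) ℂ,
      TwoQubitState ρAB ∧ TwoQubitState ρBC ∧
      ∃ tA1 tA2 tC1 tC2 : ℝ,
        topEigs ((corr ρAB)ᵀ * corr ρAB) = (tA1, tA2) ∧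
        topEigs ((corr ρBC)ᵀ * corr ρBC) = (tC1, tC2) ∧
        1 < Real.sqrt (tA1 + tA2) ∧ 1 < Real.sqrt (tC1 + tC2) ∧
        Real.sqrt (Real.sqrt (tA1 * tC1) + Real.sqrt (tA2 * tC2)) ≤ 1) ∧
    (TwoQubitState ρABex ∧ TwoQubitState ρBCex ∧
      topEigs ((corr ρABex)ᵀ * corr ρABex) = (1, 1/25) ∧
      topEigs ((corr ρBCex)ᵀ * corr ρBCex) = (16/25, 49/100) ∧
      1 < Real.sqrt (1 + 1/25) ∧ 1 < Real.sqrt (16/25 + 49/100) ∧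
      Real.sqrt (Real.sqrt ((1 : ℝ) * (16/25)) + Real.sqrt ((1/25) * (49/100))) ≤ 1) := by
  have hA : 1 < Real.sqrt (1 + 1/25) := by rw [Real.lt_sqrt zero_le_one]; norm_num
  have hC : 1 < Real.sqrt (16/25 + 49/100) := by rw [Real.lt_sqrt zero_le_one]; norm_num
  have hAC : Real.sqrt (Real.sqrt ((1 : ℝ) * (16/25)) + Real.sqrt ((1/25) * (49/100))) ≤ 1 := by
    have h₁ : Real.sqrt ((1 : ℝ) * (16/25)) = 4/5 :=
      (Real.sqrt_eq_iff_mul_self_eq_of_pos (by norm_num)).2 (by norm_num)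
    have h₂ : Real.sqrt ((1/25 : ℝ) * (49/100)) = 7/50 :=
      (Real.sqrt_eq_iff_mul_self_eq_of_pos (by norm_num)).2 (by norm_num)
    rw [h₁, h₂, Real.sqrt_le_one]
    norm_num
  exact ⟨⟨ρABex, ρBCex, twoQubitState_ρABex, twoQubitState_ρBCex, 1, 1/25, 16/25, 49/100,
      topEigs_ρABex, topEigs_ρBCex, hA, hC, hAC⟩,
    twoQubitState_ρABex, twoQubitState_ρBCex, topEigs_ρABex, topEigs_ρBCex, hA, hC, hAC⟩
end

section
/- Let ρ be a two-qubit state with correlation matrix T_ρ. Then every eigenvalue t of T_ρᵀ T_ρ satisfies 0 ≤ t ≤ 1. -/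
open Matrix Kronecker Complex ComplexOrder

lemma pauliVec_mul_self (u : Fin 3 → ℝ) :
    pauliVec u * pauliVec u = ((u 0^2 + u 1^2 + u 2^2 : ℝ) : ℂ) • 1 := by
  ext i j
  fin_cases i <;> fin_cases j <;>
    simp [pauliVec, pauli, Matrix.mul_apply, Fin.sum_univ_two, Matrix.one_apply] <;>
    ring_nf <;> simp [Complex.I_sq] <;> ring

lemma pauliVec_isHermitian (u : Fin 3 → ℝ) : (pauliVec u).IsHermitian := by
  ext i j
  fin_cases i <;> fin_cases j <;>
    simp [pauliVec, pauli, Matrix.conjTranspose_apply]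

lemma kron_isHermitian {M N : Matrix (Fin 2) (Fin 2) ℂ}
    (hM : M.IsHermitian) (hN : N.IsHermitian) : (M ⊗ₖ N).IsHermitian := by
  ext ⟨i, j⟩ ⟨k, l⟩
  have hM' := congrFun (congrFun hM i) k
  have hN' := congrFun (congrFun hN j) l
  simp only [Matrix.conjTranspose_apply, Matrix.kroneckerMap_apply, star_mul'] at *
  rw [hM', hN']

lemma trace_re_nonneg_of_posSemidef {n : Type*} [Fintype n] [DecidableEq n]
    {M : Matrix n n ℂ} (hM : M.PosSemidef) : 0 ≤ M.trace.re := by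
  rw [Matrix.trace]
  simp only [Matrix.diag]
  rw [Complex.re_sum]
  apply Finset.sum_nonneg
  intro i _
  have := hM.re_dotProduct_nonneg (Pi.single i 1)
  simpa [dotProduct, Matrix.mulVec, Pi.single_apply] using this

lemma dot_corr (ρ : Matrix (Fin 2 × Fin 2) (Fin 2 × Fin 2) ℂ) (u w : Fin 3 → ℝ) :
    u ⬝ᵥ (corr ρ).mulVec w = ((pauliVec u ⊗ₖ pauliVec w) * ρ).trace.re := by
  simp only [pauliVec, Matrix.add_kronecker, Matrix.kronecker_add, Matrix.smul_kronecker,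
    Matrix.kronecker_smul, Matrix.add_mul, Matrix.smul_mul, Matrix.trace_add,
    Matrix.trace_smul, smul_smul, smul_eq_mul, Complex.add_re, corr, dotProduct,
    Matrix.mulVec, Fin.sum_univ_three, Complex.mul_re, Complex.ofReal_re, Complex.ofReal_im,
    Matrix.of_apply]
  ring

lemma trace_kron_le (ρ : Matrix (Fin 2 × Fin 2) (Fin 2 × Fin 2) ℂ) (hρ : TwoQubitState ρ)
    (u w : Fin 3 → ℝ) :
    ((pauliVec u ⊗ₖ pauliVec w) * ρ).trace.re ≤
      Real.sqrt (u ⬝ᵥ u) * Real.sqrt (w ⬝ᵥ w) := by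
  have hdu : u ⬝ᵥ u = u 0 ^ 2 + u 1 ^ 2 + u 2 ^ 2 := by
    simp [dotProduct, Fin.sum_univ_three, sq]
  have hdw : w ⬝ᵥ w = w 0 ^ 2 + w 1 ^ 2 + w 2 ^ 2 := by
    simp [dotProduct, Fin.sum_univ_three, sq]
  have hu0 : 0 ≤ u ⬝ᵥ u := by rw [hdu]; positivity
  have hw0 : 0 ≤ w ⬝ᵥ w := by rw [hdw]; positivity
  set c : ℝ := Real.sqrt (u ⬝ᵥ u) * Real.sqrt (w ⬝ᵥ w) with hc
  have hc0 : 0 ≤ c := by positivity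
  rcases eq_or_lt_of_le hc0 with hceq | hcpos
  · -- c = 0 : then u = 0 or w = 0, so the kron product is 0
    have : Real.sqrt (u ⬝ᵥ u) = 0 ∨ Real.sqrt (w ⬝ᵥ w) = 0 := by
      rcases mul_eq_zero.mp hceq.symm with h | h
      · exact Or.inl h
      · exact Or.inr h
    have hz : pauliVec u = 0 ∨ pauliVec w = 0 := by
      rcases this with h | h
      · left
        have := Real.sqrt_eq_zero hu0 |>.mp h
        have h0 : u 0 = 0 ∧ u 1 = 0 ∧ u 2 = 0 := by
          rw [hdu] at this; refine ⟨?_, ?_, ?_⟩ <;> nlinarith [sq_nonneg (u 0), sq_nonneg (u 1), sq_nonneg (u 2)]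
        simp [pauliVec, h0.1, h0.2.1, h0.2.2]
      · right
        have := Real.sqrt_eq_zero hw0 |>.mp h
        have h0 : w 0 = 0 ∧ w 1 = 0 ∧ w 2 = 0 := by
          rw [hdw] at this; refine ⟨?_, ?_, ?_⟩ <;> nlinarith [sq_nonneg (w 0), sq_nonneg (w 1), sq_nonneg (w 2)]
        simp [pauliVec, h0.1, h0.2.1, h0.2.2]
    have hA0 : (pauliVec u ⊗ₖ pauliVec w) = 0 := by
      rcases hz with h | h <;> simp [h]
    rw [hA0]
    simp [← hceq]
  · -- c > 0
    set A := pauliVec u ⊗ₖ pauliVec w with hA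
    have hAH : A.IsHermitian := kron_isHermitian (pauliVec_isHermitian u) (pauliVec_isHermitian w)
    have hA2 : A * A = ((c ^ 2 : ℝ) : ℂ) • 1 := by
      rw [hA, ← Matrix.mul_kronecker_mul, pauliVec_mul_self, pauliVec_mul_self,
        Matrix.smul_kronecker, Matrix.kronecker_smul, Matrix.one_kronecker_one, smul_smul]
      congr 1
      rw [← Complex.ofReal_mul]
      congr 1
      rw [hc, mul_pow, Real.sq_sqrt hu0, Real.sq_sqrt hw0, hdu, hdw]
    set B : Matrix (Fin 2 × Fin 2) (Fin 2 × Fin 2) ℂ := ((c : ℝ) : ℂ) • 1 - A with hB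
    have hBH : Bᴴ = B := by
      rw [hB, Matrix.conjTranspose_sub, Matrix.conjTranspose_smul, Matrix.conjTranspose_one,
        hAH.eq]
      simp
    have hB2 : B * B = ((2 * c : ℝ) : ℂ) • B := by
      rw [hB]
      rw [sub_mul, mul_sub, mul_sub, hA2]
      simp only [smul_mul_assoc, mul_smul_comm, one_mul, mul_one]
      push_cast
      module
    have hPSD : (Bᴴ * ρ * B).PosSemidef := hρ.1.conjTranspose_mul_mul_same B
    have h1 : 0 ≤ (Bᴴ * ρ * B).trace.re := trace_re_nonneg_of_posSemidef hPSD
    have h2 : (Bᴴ * ρ * B).trace = ((2 * c : ℝ) : ℂ) • (B * ρ).trace := by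
      rw [hBH, Matrix.trace_mul_cycle, hB2, Matrix.smul_mul, Matrix.trace_smul]
    have h3 : 0 ≤ ((B * ρ).trace.re) := by
      rw [h2] at h1
      have : (((2 * c : ℝ) : ℂ) • (B * ρ).trace).re = (2 * c) * (B * ρ).trace.re := by
        simp [Complex.smul_re]
      rw [this] at h1
      nlinarith
    have h4 : (B * ρ).trace.re = c - (A * ρ).trace.re := by
      rw [hB, Matrix.sub_mul, Matrix.trace_sub, Matrix.smul_mul, Matrix.trace_smul,
        Matrix.one_mul, hρ.2]
      simp [Complex.smul_re]
    linarith [h4 ▸ h3]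

/-- Every eigenvalue t of T_ρᵀ T_ρ, for ρ a two-qubit state, satisfies 0 ≤ t ≤ 1. -/
theorem eigenvalues_corr_transpose_mul_corr_mem_unit_interval
    (ρ : Matrix (Fin 2 × Fin 2) (Fin 2 × Fin 2) ℂ) (hρ : TwoQubitState ρ)
    (t : ℝ) (ht : ∃ v : Fin 3 → ℝ, v ≠ 0 ∧ ((corr ρ)ᵀ * corr ρ).mulVec v = t • v) :
    0 ≤ t ∧ t ≤ 1 := by
  obtain ⟨v, hv0, heig⟩ := ht
  have hN0 : 0 < v ⬝ᵥ v := by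
    have hne : v ⬝ᵥ v ≠ 0 := fun h => hv0 (dotProduct_self_eq_zero.mp h)
    have : 0 ≤ v ⬝ᵥ v := Finset.sum_nonneg fun i _ => mul_self_nonneg _
    exact lt_of_le_of_ne this (Ne.symm hne)
  have huu : ((corr ρ).mulVec v) ⬝ᵥ ((corr ρ).mulVec v) = t * (v ⬝ᵥ v) := by
    have h : v ⬝ᵥ (((corr ρ)ᵀ * corr ρ).mulVec v) = t * (v ⬝ᵥ v) := by
      rw [heig, dotProduct_smul, smul_eq_mul]
    rw [← Matrix.mulVec_mulVec, Matrix.dotProduct_mulVec, Matrix.vecMul_transpose] at h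
    exact h
  have ht0 : 0 ≤ t := by
    have h : 0 ≤ ((corr ρ).mulVec v) ⬝ᵥ ((corr ρ).mulVec v) :=
      Finset.sum_nonneg fun i _ => mul_self_nonneg _
    nlinarith
  refine ⟨ht0, ?_⟩
  have key := trace_kron_le ρ hρ ((corr ρ).mulVec v) v
  rw [← dot_corr ρ ((corr ρ).mulVec v) v] at key
  have hsq : Real.sqrt (t * (v ⬝ᵥ v)) = Real.sqrt t * Real.sqrt (v ⬝ᵥ v) :=
    Real.sqrt_mul ht0 _
  rw [huu, hsq] at key
  have hst : Real.sqrt t * Real.sqrt t = t := Real.mul_self_sqrt ht0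
  have hsv : Real.sqrt (v ⬝ᵥ v) * Real.sqrt (v ⬝ᵥ v) = v ⬝ᵥ v := Real.mul_self_sqrt hN0.le
  have hts : t ≤ Real.sqrt t := by nlinarith
  nlinarith [sq_nonneg (Real.sqrt t - 1), Real.sqrt_nonneg t]
end
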